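/- For 0 < α < 1/2, the operator norm difference between the integral operators on L²(0,1) with kernels |x-y|^{2α-1} and the constant kernel 1 satisfies ‖K_α - K_{1/2}‖ ≤ 1/α - 2; in particular it tends to 0 as α → 1/2⁻. -/

import Mathlib

open MeasureTheory Filter Asymptotics Real Set

noncomputable def specNorm {n : ℕ} (M : Matrix (Fin n) (Fin n) ℂ) : ℝ :=
  ‖Matrix.toEuclideanCLM (𝕜 := ℂ) (n := Fin n) M‖

noncomputable def toeplitz (a : ℤ → ℂ) (n : ℕ) : Matrix (Fin n) (Fin n) ℂ :=
  Matrix.of fun j k => a ((j : ℤ) - (k : ℤ))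

noncomputable abbrev μ01 : Measure ℝ := volume.restrict (Set.Ioo 0 1)

noncomputable abbrev L2I := Lp ℂ 2 μ01

def IsIntegralOp (k : ℝ → ℝ → ℂ) (K : L2I →L[ℂ] L2I) : Prop :=
  ∀ f : L2I, ∀ᵐ x ∂μ01, (K f : ℝ → ℂ) x = ∫ y in Set.Ioo (0:ℝ) 1, k x y * (f : ℝ → ℂ) y

noncomputable def fc (a : ℝ → ℂ) (k : ℤ) : ℂ :=
  (1 / (2 * π)) * ∫ θ in (-π)..π, a θ * Complex.exp (-Complex.I * k * θ)

instance : IsFiniteMeasure μ01 := ⟨by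
  rw [Measure.restrict_apply_univ]; simp [Real.volume_Ioo]⟩

lemma pieceA {β : ℝ} (hβ : -1 < β) (x : ℝ) :
    IntegrableOn (fun y => |x - y| ^ β) (Ioc 0 x) volume := by
  have h2 := ((intervalIntegral.intervalIntegrable_rpow' (a := 0) (b := x) hβ).comp_sub_left x)
  simp only [sub_self, sub_zero] at h2
  refine (h2.2).congr_fun ?_ measurableSet_Ioc
  intro y hy
  show (x - y) ^ β = |x - y| ^ β
  rw [abs_of_nonneg (by linarith [hy.2] : (0:ℝ) ≤ x - y)]

lemma pieceB {β : ℝ} (hβ : -1 < β) (x : ℝ) :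
    IntegrableOn (fun y => |x - y| ^ β) (Ioc x 1) volume := by
  have h2 := ((intervalIntegral.intervalIntegrable_rpow' (a := 0) (b := 1 - x) hβ).comp_sub_right x)
  simp only [zero_add, sub_add_cancel] at h2
  refine (h2.1).congr_fun ?_ measurableSet_Ioc
  intro y hy
  show (y - x) ^ β = |x - y| ^ β
  rw [abs_of_nonpos (by linarith [hy.1] : x - y ≤ 0), neg_sub]

lemma rowInt {β : ℝ} (hβ : -1 < β) (x : ℝ) :
    IntegrableOn (fun y => |x - y| ^ β) (Ioo 0 1) volume := by
  refine (((pieceA hβ x).union (pieceB hβ x)).mono_set ?_)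
  intro y hy
  rcases le_or_gt y x with h | h
  · exact Or.inl ⟨hy.1, h⟩
  · exact Or.inr ⟨h, hy.2.le⟩

lemma rowVal {α x : ℝ} (hα : α ∈ Ioo 0 (1/2)) (hx : x ∈ Icc (0:ℝ) 1) :
    ∫ y in Ioo (0:ℝ) 1, |x - y| ^ (2*α - 1) ≤ 1/α - 1 := by
  obtain ⟨hα0, hα12⟩ := hα
  have hβ : (-1:ℝ) < 2*α - 1 := by linarith
  have h2α : (0:ℝ) < 2*α := by linarith
  have h1 : IntervalIntegrable (fun y => |x - y| ^ (2*α-1)) volume 0 x :=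
    (intervalIntegrable_iff_integrableOn_Ioc_of_le hx.1).mpr (pieceA hβ x)
  have h2 : IntervalIntegrable (fun y => |x - y| ^ (2*α-1)) volume x 1 :=
    (intervalIntegrable_iff_integrableOn_Ioc_of_le hx.2).mpr (pieceB hβ x)
  have e0 : ∫ y in Ioo (0:ℝ) 1, |x - y| ^ (2*α - 1) =
      ∫ y in (0:ℝ)..1, |x - y| ^ (2*α - 1) := by
    rw [intervalIntegral.integral_of_le (by norm_num : (0:ℝ) ≤ 1), integral_Ioc_eq_integral_Ioo]
  have eA : ∫ y in (0:ℝ)..x, |x - y| ^ (2*α - 1) = x ^ (2*α) / (2*α) := by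
    have : ∫ y in (0:ℝ)..x, |x - y| ^ (2*α - 1) = ∫ y in (0:ℝ)..x, (x - y) ^ (2*α - 1) := by
      apply intervalIntegral.integral_congr
      intro y hy
      rw [uIcc_of_le hx.1] at hy
      show |x - y| ^ _ = _
      rw [abs_of_nonneg (by linarith [hy.2] : (0:ℝ) ≤ x - y)]
    rw [this, intervalIntegral.integral_comp_sub_left (fun u => u ^ (2*α-1)) x, sub_self, sub_zero,
      integral_rpow (Or.inl hβ)]
    rw [Real.zero_rpow (by linarith : 2*α - 1 + 1 ≠ 0)]
    ring_nf
  have eB : ∫ y in x..(1:ℝ), |x - y| ^ (2*α - 1) = (1-x) ^ (2*α) / (2*α) := by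
    have : ∫ y in x..(1:ℝ), |x - y| ^ (2*α - 1) = ∫ y in x..(1:ℝ), (y - x) ^ (2*α - 1) := by
      apply intervalIntegral.integral_congr
      intro y hy
      rw [uIcc_of_le hx.2] at hy
      show |x - y| ^ _ = _
      rw [abs_of_nonpos (by linarith [hy.1] : x - y ≤ 0), neg_sub]
    rw [this, intervalIntegral.integral_comp_sub_right (fun u => u ^ (2*α-1)) x, sub_self,
      integral_rpow (Or.inl hβ)]
    rw [Real.zero_rpow (by linarith : 2*α - 1 + 1 ≠ 0)]
    ring_nf
  have hsplit : ∫ y in (0:ℝ)..1, |x - y| ^ (2*α - 1) =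
      (∫ y in (0:ℝ)..x, |x - y| ^ (2*α - 1)) + ∫ y in x..(1:ℝ), |x - y| ^ (2*α - 1) :=
    (intervalIntegral.integral_add_adjacent_intervals h1 h2).symm
  rw [e0, hsplit, eA, eB]
  have hb1 : x ^ (2*α) ≤ 1 + (2*α) * (x - 1) := by
    have := rpow_one_add_le_one_add_mul_self (s := x - 1) (by linarith [hx.1])
      (by linarith : (0:ℝ) ≤ 2*α) (by linarith : 2*α ≤ 1)
    simpa [add_sub_cancel] using this
  have hb2 : (1 - x) ^ (2*α) ≤ 1 + (2*α) * (-x) := by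
    have := rpow_one_add_le_one_add_mul_self (s := -x) (by linarith [hx.2])
      (by linarith : (0:ℝ) ≤ 2*α) (by linarith : 2*α ≤ 1)
    simpa [show (1:ℝ) + -x = 1 - x by ring] using this
  have : x ^ (2*α) / (2*α) + (1-x) ^ (2*α) / (2*α) ≤ (2 - 2*α) / (2*α) := by
    rw [← add_div]
    gcongr
    linarith
  refine this.trans (le_of_eq ?_)
  field_simp


lemma rowBound {α x : ℝ} (hα : α ∈ Ioo 0 (1/2)) (hx : x ∈ Ioo (0:ℝ) 1) :
    ∫⁻ y, ENNReal.ofReal (|x - y| ^ (2*α - 1) - 1) ∂μ01 ≤ ENNReal.ofReal (1/α - 2) := by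
  have hβ : (-1:ℝ) < 2*α - 1 := by linarith [hα.1]
  have hki : Integrable (fun y => |x - y| ^ (2*α-1)) μ01 := rowInt hβ x
  have hgi : Integrable (fun y => |x - y| ^ (2*α-1) - 1) μ01 := hki.sub (integrable_const 1)
  have hnn : 0 ≤ᵐ[μ01] fun y => |x - y| ^ (2*α-1) - 1 := by
    have h1 : ∀ᵐ y ∂μ01, y ∈ Ioo (0:ℝ) 1 := ae_restrict_mem measurableSet_Ioo
    have h2 : ∀ᵐ (y:ℝ) ∂μ01, y ≠ x := by
      refine ae_restrict_of_ae ?_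
      rw [ae_iff]
      convert Real.volume_singleton (a := x) using 2
      ext y; simp
    filter_upwards [h1, h2] with y hy hyx
    have habs : 0 < |x - y| := abs_pos.mpr (sub_ne_zero.mpr (Ne.symm hyx))
    have habs1 : |x - y| ≤ 1 := by
      rw [abs_le]
      constructor
      · linarith [hx.1, hx.2, hy.1, hy.2]
      · linarith [hx.1, hx.2, hy.1, hy.2]
    have := Real.one_le_rpow_of_pos_of_le_one_of_nonpos habs habs1
      (by linarith [hα.2] : 2*α-1 ≤ 0)
    show (0:ℝ) ≤ _
    linarith
  rw [← ofReal_integral_eq_lintegral_ofReal hgi hnn]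
  apply ENNReal.ofReal_le_ofReal
  have : ∫ y, (|x - y| ^ (2*α-1) - 1) ∂μ01 = (∫ y in Ioo (0:ℝ) 1, |x - y| ^ (2*α-1)) - 1 := by
    rw [integral_sub hki (integrable_const 1), integral_const]
    simp [Real.volume_Ioo]
  rw [this]
  linarith [rowVal hα ⟨hx.1.le, hx.2.le⟩]

lemma CSstep {G : ℝ → ENNReal} (hG : Measurable G) {n : ℝ → ENNReal} (hn : AEMeasurable n μ01) :
    (∫⁻ y, G y * n y ∂μ01) ^ (2:ℝ) ≤
      (∫⁻ y, G y ∂μ01) * ∫⁻ y, G y * n y ^ (2:ℝ) ∂μ01 := by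
  have hpq : Real.HolderConjugate 2 2 := Real.holderConjugate_iff.mpr ⟨one_lt_two, by norm_num⟩
  have h := ENNReal.lintegral_mul_le_Lp_mul_Lq μ01 hpq
    (f := fun y => (G y) ^ (1/2:ℝ)) (g := fun y => (G y) ^ (1/2:ℝ) * n y)
    ((hG.pow_const _).aemeasurable) (((hG.pow_const _).aemeasurable).mul hn)
  have e1 : ∀ y, ((fun y => (G y) ^ (1/2:ℝ)) * fun y => (G y) ^ (1/2:ℝ) * n y) y = G y * n y := by
    intro y
    show (G y) ^ (1/2:ℝ) * ((G y) ^ (1/2:ℝ) * n y) = _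
    rw [← mul_assoc, ← ENNReal.rpow_add_of_nonneg _ _ (by norm_num) (by norm_num)]
    norm_num
  have e2 : ∀ y, ((G y) ^ (1/2:ℝ)) ^ (2:ℝ) = G y := by
    intro y
    rw [← ENNReal.rpow_mul]
    norm_num
  have e3 : ∀ y, ((G y) ^ (1/2:ℝ) * n y) ^ (2:ℝ) = G y * n y ^ (2:ℝ) := by
    intro y
    rw [ENNReal.mul_rpow_of_nonneg _ _ (by norm_num : (0:ℝ) ≤ 2), ← ENNReal.rpow_mul]
    norm_num
  simp only [e1, e2, e3] at h
  calc (∫⁻ y, G y * n y ∂μ01) ^ (2:ℝ)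
      ≤ ((∫⁻ y, G y ∂μ01) ^ (1/2:ℝ) * (∫⁻ y, G y * n y ^ (2:ℝ) ∂μ01) ^ (1/2:ℝ)) ^ (2:ℝ) := by
        exact ENNReal.rpow_le_rpow h (by norm_num)
    _ = _ := by
        rw [ENNReal.mul_rpow_of_nonneg _ _ (by norm_num : (0:ℝ) ≤ 2), ← ENNReal.rpow_mul,
          ← ENNReal.rpow_mul]
        norm_num

lemma measAbsRpow {β : ℝ} (hβ : β ≠ 0) : Measurable (fun t : ℝ => |t| ^ β) := by
  have e : (fun t : ℝ => |t| ^ β) =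
      fun t => if t = 0 then 0 else Real.exp (Real.log |t| * β) := by
    funext t
    by_cases h : t = 0
    · simp [h, Real.zero_rpow hβ]
    · rw [if_neg h, Real.rpow_def_of_pos (abs_pos.mpr h)]
  rw [e]
  exact Measurable.ite (MeasurableSet.singleton 0)
    measurable_const ((Real.measurable_log.comp measurable_abs).mul_const β).exp

lemma measK {α x : ℝ} (hα : α ∈ Ioo 0 (1/2)) :
    Measurable (fun y : ℝ => |x - y| ^ (2*α - 1)) := by
  have : (fun y : ℝ => |x - y| ^ (2*α - 1)) =
      (fun t : ℝ => |t| ^ (2*α - 1)) ∘ fun y => x - y := rfl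
  rw [this]
  exact (measAbsRpow (by intro h; have := hα.2; norm_num at this; linarith)).comp
    (measurable_const.sub measurable_id)


lemma pointBound {α : ℝ} (hα : α ∈ Ioo 0 (1/2)) {f : ℝ → ℂ}
    (hfm : AEStronglyMeasurable f μ01) (hfi : Integrable f μ01)
    {A B : ℝ → ℂ}
    (hA : ∀ᵐ x ∂μ01, A x = ∫ y in Ioo (0:ℝ) 1, ((|x - y| ^ (2*α-1) : ℝ) : ℂ) * f y)
    (hB : ∀ᵐ x ∂μ01, B x = ∫ y in Ioo (0:ℝ) 1, f y) :
    ∀ᵐ x ∂μ01, (‖A x - B x‖₊ : ENNReal) ≤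
      ∫⁻ y, ENNReal.ofReal (|x - y| ^ (2*α-1) - 1) * ‖f y‖₊ ∂μ01 := by
  have hae : ∀ᵐ (y:ℝ) ∂μ01, y ∈ Ioo (0:ℝ) 1 := ae_restrict_mem measurableSet_Ioo
  filter_upwards [hA, hB, ae_restrict_mem measurableSet_Ioo] with x hAx hBx hx
  set k : ℝ → ℝ := fun y => |x - y| ^ (2*α-1) with hk
  have hk0 : ∀ y, 0 ≤ k y := fun y => Real.rpow_nonneg (abs_nonneg _) _
  have hkm : Measurable k := measK hα
  have haeq : ∀ᵐ (y:ℝ) ∂μ01, y ≠ x := by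
    refine ae_restrict_of_ae ?_
    rw [ae_iff]
    convert Real.volume_singleton (a := x) using 2
    ext y; simp
  by_cases hint : Integrable (fun y => (k y : ℂ) * f y) μ01
  · rw [hAx, hBx, ← integral_sub hint hfi]
    calc (‖∫ y, ((k y:ℂ) * f y - f y) ∂μ01‖₊ : ENNReal)
        ≤ ∫⁻ y, ‖(k y:ℂ) * f y - f y‖₊ ∂μ01 := enorm_integral_le_lintegral_enorm _
      _ ≤ _ := by
          apply lintegral_mono_ae
          filter_upwards [haeq, hae] with y hy hymem
          have h1k : 1 ≤ k y := by
            apply Real.one_le_rpow_of_pos_of_le_one_of_nonpos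
            · exact abs_pos.mpr (sub_ne_zero.mpr (Ne.symm hy))
            · rw [abs_le]
              constructor
              · linarith [hx.1, hx.2, hymem.1, hymem.2]
              · linarith [hx.1, hx.2, hymem.1, hymem.2]
            · linarith [hα.2]
          have e : (k y:ℂ) * f y - f y = ((k y - 1 : ℝ) : ℂ) * f y := by
            push_cast; ring
          rw [e, nnnorm_mul, ENNReal.coe_mul, Complex.nnnorm_real, ← enorm_eq_nnnorm (k y - 1),
            Real.enorm_eq_ofReal (by linarith : (0:ℝ) ≤ k y - 1)]
  · -- divergent case: the right-hand side is infinite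
    have hkfm : AEStronglyMeasurable (fun y => (k y : ℂ) * f y) μ01 :=
      ((Complex.measurable_ofReal.comp hkm).aestronglyMeasurable).mul hfm
    have hfin : ∫⁻ y, ‖(k y:ℂ) * f y‖₊ ∂μ01 = ⊤ := by
      by_contra h
      exact hint ⟨hkfm, lt_top_iff_ne_top.mpr h⟩
    have htop : ∫⁻ y, ENNReal.ofReal (k y - 1) * ‖f y‖₊ ∂μ01 = ⊤ := by
      by_contra h
      have hb : ∀ y, (‖(k y:ℂ) * f y‖₊ : ENNReal) ≤
          ENNReal.ofReal (k y - 1) * ‖f y‖₊ + ‖f y‖₊ := by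
        intro y
        rw [nnnorm_mul, ENNReal.coe_mul, Complex.nnnorm_real, ← enorm_eq_nnnorm (k y),
          Real.enorm_eq_ofReal (hk0 y)]
        calc ENNReal.ofReal (k y) * ‖f y‖₊
            ≤ (ENNReal.ofReal (k y - 1) + ENNReal.ofReal 1) * ‖f y‖₊ := by
              gcongr
              calc ENNReal.ofReal (k y) = ENNReal.ofReal ((k y - 1) + 1) := by ring_nf
                _ ≤ _ := ENNReal.ofReal_add_le
            _ = ENNReal.ofReal (k y - 1) * ‖f y‖₊ + ‖f y‖₊ := by
              rw [ENNReal.ofReal_one, add_mul, one_mul]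
      have hmono := lintegral_mono (μ := μ01) hb
      rw [hfin] at hmono
      have hadd : ∫⁻ y, (ENNReal.ofReal (k y - 1) * ‖f y‖₊ + ‖f y‖₊) ∂μ01 =
          (∫⁻ y, ENNReal.ofReal (k y - 1) * ‖f y‖₊ ∂μ01) + ∫⁻ y, (‖f y‖₊ : ENNReal) ∂μ01 := by
        apply lintegral_add_left'
        exact ((ENNReal.measurable_ofReal.comp (hkm.sub measurable_const)).aemeasurable).mul
          hfm.enorm
      rw [hadd] at hmono
      exact absurd (top_le_iff.mp hmono)
        (ENNReal.add_lt_top.mpr ⟨lt_top_iff_ne_top.mpr h, hfi.2⟩).ne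
    rw [htop]
    exact le_top

lemma mainBound {α : ℝ} (hα : α ∈ Ioo 0 (1/2)) {f D : ℝ → ℂ}
    (hfm : AEStronglyMeasurable f μ01)
    (hD : ∀ᵐ x ∂μ01, (‖D x‖₊ : ENNReal) ≤
      ∫⁻ y, ENNReal.ofReal (|x - y| ^ (2*α-1) - 1) * ‖f y‖₊ ∂μ01) :
    eLpNorm D 2 μ01 ≤ ENNReal.ofReal (1/α - 2) * eLpNorm f 2 μ01 := by
  set C := ENNReal.ofReal (1/α - 2) with hC
  set φ := hfm.mk f with hφdef
  have hφm : StronglyMeasurable φ := hfm.stronglyMeasurable_mk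
  have hφ : f =ᵐ[μ01] φ := hfm.ae_eq_mk
  set n : ℝ → ENNReal := fun y => (‖φ y‖₊ : ENNReal) with hn
  have hnm : Measurable n := hφm.measurable.nnnorm.coe_nnreal_ennreal
  set G : ℝ → ℝ → ENNReal :=
    fun x y => ENNReal.ofReal (|x - y| ^ (2*α-1) - 1) with hG
  have hβne : (2*α - 1) ≠ 0 := by
    intro h; have := hα.2; norm_num at this; linarith
  have hGxm : ∀ x, Measurable (G x) := fun x =>
    ENNReal.measurable_ofReal.comp ((measK hα).sub measurable_const)
  have hGprod : Measurable (fun p : ℝ × ℝ => G p.1 p.2) := by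
    apply ENNReal.measurable_ofReal.comp
    exact (((measAbsRpow hβne).comp (measurable_fst.sub measurable_snd)).sub measurable_const)
  have hD' : ∀ᵐ x ∂μ01, (‖D x‖₊ : ENNReal) ≤ ∫⁻ y, G x y * n y ∂μ01 := by
    filter_upwards [hD] with x hx
    refine hx.trans_eq (lintegral_congr_ae ?_)
    filter_upwards [hφ] with y hy
    rw [hn, hy]
  have hrow : ∀ᵐ x ∂μ01, ∫⁻ y, G x y ∂μ01 ≤ C := by
    filter_upwards [ae_restrict_mem measurableSet_Ioo] with x hx
    exact rowBound hα hx
  have hcol : ∀ᵐ y ∂μ01, ∫⁻ x, G x y ∂μ01 ≤ C := by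
    filter_upwards [ae_restrict_mem measurableSet_Ioo] with y hy
    have : ∫⁻ x, G x y ∂μ01 = ∫⁻ x, G y x ∂μ01 := by
      apply lintegral_congr
      intro x
      rw [hG]
      simp only []
      rw [abs_sub_comm]
    rw [this]
    exact rowBound hα hy
  have hCtop : C ≠ ⊤ := ENNReal.ofReal_ne_top
  have key : ∫⁻ x, (‖D x‖₊ : ENNReal) ^ (2:ℝ) ∂μ01 ≤
      C ^ (2:ℝ) * ∫⁻ y, n y ^ (2:ℝ) ∂μ01 := by
    calc ∫⁻ x, (‖D x‖₊ : ENNReal) ^ (2:ℝ) ∂μ01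
        ≤ ∫⁻ x, (∫⁻ y, G x y * n y ∂μ01) ^ (2:ℝ) ∂μ01 := by
          apply lintegral_mono_ae
          filter_upwards [hD'] with x hx
          exact ENNReal.rpow_le_rpow hx (by norm_num)
      _ ≤ ∫⁻ x, C * ∫⁻ y, G x y * n y ^ (2:ℝ) ∂μ01 ∂μ01 := by
          apply lintegral_mono_ae
          filter_upwards [hrow] with x hx
          calc (∫⁻ y, G x y * n y ∂μ01) ^ (2:ℝ)
              ≤ (∫⁻ y, G x y ∂μ01) * ∫⁻ y, G x y * n y ^ (2:ℝ) ∂μ01 :=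
                CSstep (hGxm x) hnm.aemeasurable
            _ ≤ C * ∫⁻ y, G x y * n y ^ (2:ℝ) ∂μ01 := mul_le_mul_left hx _
      _ = C * ∫⁻ x, ∫⁻ y, G x y * n y ^ (2:ℝ) ∂μ01 ∂μ01 :=
          lintegral_const_mul' _ _ hCtop
      _ = C * ∫⁻ y, ∫⁻ x, G x y * n y ^ (2:ℝ) ∂μ01 ∂μ01 := by
          rw [lintegral_lintegral_swap]
          exact (hGprod.mul ((hnm.comp measurable_snd).pow_const _)).aemeasurable
      _ ≤ C * ∫⁻ y, C * n y ^ (2:ℝ) ∂μ01 := by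
          refine mul_le_mul_right (lintegral_mono_ae ?_) C
          filter_upwards [hcol] with y hy
          rw [lintegral_mul_const' _ _
            (ENNReal.rpow_ne_top_of_nonneg (by norm_num) ENNReal.coe_ne_top)]
          exact mul_le_mul_left hy _
      _ = C ^ (2:ℝ) * ∫⁻ y, n y ^ (2:ℝ) ∂μ01 := by
          rw [lintegral_const_mul' _ _ hCtop, ← mul_assoc]
          congr 1
          rw [show (2:ℝ) = ((2:ℕ):ℝ) by norm_num, ENNReal.rpow_natCast]
          ring
  have e2 : ((2:ENNReal)).toReal = (2:ℝ) := by simp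
  rw [eLpNorm_eq_lintegral_rpow_enorm_toReal (by norm_num) (by norm_num),
    eLpNorm_eq_lintegral_rpow_enorm_toReal (by norm_num) (by norm_num), e2]
  simp only [enorm_eq_nnnorm]
  have hff : ∫⁻ y, (‖f y‖₊ : ENNReal) ^ (2:ℝ) ∂μ01 = ∫⁻ y, n y ^ (2:ℝ) ∂μ01 := by
    apply lintegral_congr_ae
    filter_upwards [hφ] with y hy
    rw [hn, hy]
  rw [hff]
  calc (∫⁻ x, (‖D x‖₊ : ENNReal) ^ (2:ℝ) ∂μ01) ^ (1/(2:ℝ))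
      ≤ (C ^ (2:ℝ) * ∫⁻ y, n y ^ (2:ℝ) ∂μ01) ^ (1/(2:ℝ)) :=
        ENNReal.rpow_le_rpow key (by norm_num)
    _ = C * (∫⁻ y, n y ^ (2:ℝ) ∂μ01) ^ (1/(2:ℝ)) := by
        rw [ENNReal.mul_rpow_of_nonneg _ _ (by norm_num : (0:ℝ) ≤ 1/2), ← ENNReal.rpow_mul]
        norm_num

theorem stmt18 (Kf : ℝ → L2I →L[ℂ] L2I) (K₀ : L2I →L[ℂ] L2I)
    (hK₀ : IsIntegralOp (fun _ _ => (1 : ℂ)) K₀)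
    (hKf : ∀ α ∈ Set.Ioo (0 : ℝ) (1/2),
      IsIntegralOp (fun x y => ((|x - y| ^ (2 * α - 1) : ℝ) : ℂ)) (Kf α)) :
    (∀ α ∈ Set.Ioo (0 : ℝ) (1/2), ‖Kf α - K₀‖ ≤ 1 / α - 2) ∧
    Tendsto (fun α => ‖Kf α - K₀‖) (nhdsWithin (1/2) (Set.Ioo (0 : ℝ) (1/2))) (nhds 0) := by
  have h1 : ∀ α ∈ Set.Ioo (0 : ℝ) (1/2), ‖Kf α - K₀‖ ≤ 1 / α - 2 := by
    intro α hα
    have h2α : 2 * α < 1 := by have := hα.2; norm_num at this ⊢; linarith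
    have hinv : 2 < 1/α := by rw [lt_div_iff₀ hα.1]; linarith
    have hC0 : (0:ℝ) ≤ 1/α - 2 := by linarith
    refine ContinuousLinearMap.opNorm_le_bound _ hC0 (fun f => ?_)
    have hfm : AEStronglyMeasurable (⇑f : ℝ → ℂ) μ01 := Lp.aestronglyMeasurable f
    have hfi : Integrable (⇑f : ℝ → ℂ) μ01 := (Lp.memLp f).integrable (by norm_num)
    have hA := hKf α hα f
    have hB := hK₀ f
    simp only [one_mul] at hB
    have hpt := pointBound hα hfm hfi hA hB
    have hsub : ⇑((Kf α - K₀) f) =ᵐ[μ01]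
        fun x => (Kf α f : ℝ → ℂ) x - (K₀ f : ℝ → ℂ) x := by
      rw [ContinuousLinearMap.sub_apply]
      exact Lp.coeFn_sub _ _
    have hD : ∀ᵐ x ∂μ01, (‖((Kf α - K₀) f : ℝ → ℂ) x‖₊ : ENNReal) ≤
        ∫⁻ y, ENNReal.ofReal (|x - y| ^ (2*α-1) - 1) * ‖(f : ℝ → ℂ) y‖₊ ∂μ01 := by
      filter_upwards [hsub, hpt] with x h1 h2
      rw [h1]
      exact h2
    have hmain := mainBound hα hfm hD
    rw [Lp.norm_def, Lp.norm_def]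
    have hne : ENNReal.ofReal (1/α - 2) * eLpNorm (⇑f : ℝ → ℂ) 2 μ01 ≠ ⊤ :=
      ENNReal.mul_ne_top ENNReal.ofReal_ne_top (Lp.eLpNorm_ne_top f)
    calc (eLpNorm (⇑((Kf α - K₀) f) : ℝ → ℂ) 2 μ01).toReal
        ≤ (ENNReal.ofReal (1/α - 2) * eLpNorm (⇑f : ℝ → ℂ) 2 μ01).toReal :=
          ENNReal.toReal_mono hne hmain
      _ = (1/α - 2) * (eLpNorm (⇑f : ℝ → ℂ) 2 μ01).toReal := by
          rw [ENNReal.toReal_mul, ENNReal.toReal_ofReal hC0]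
  refine ⟨h1, ?_⟩
  have h0 : Tendsto (fun α : ℝ => 1/α - 2) (nhdsWithin (1/2) (Set.Ioo (0:ℝ) (1/2)))
      (nhds 0) := by
    have hc : ContinuousAt (fun α : ℝ => 1/α - 2) (1/2) :=
      (ContinuousAt.div continuousAt_const continuousAt_id (by norm_num)).sub
        continuousAt_const
    have ht := hc.tendsto.mono_left (nhdsWithin_le_nhds (s := Set.Ioo (0:ℝ) (1/2)))
    convert ht using 2
    norm_num
  refine tendsto_of_tendsto_of_tendsto_of_le_of_le' tendsto_const_nhds h0 ?_ ?_
  · exact Eventually.of_forall (fun α => norm_nonneg _)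
  · exact eventually_nhdsWithin_of_forall (fun α hα => h1 α hα)
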